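/- Let n ≥ 1, let 0 ≤ δ < 1/(2n), and let v'₁, …, v'ₙ be unit vectors in a complex inner product space such that |⟨v'_i, v'_j⟩| ≤ δ for all i ≠ j. Then for every i with 1 ≤ i < n, the orthogonal projection a_{i+1} of v'_{i+1} onto the span of v'₁, …, v'_i satisfies ‖a_{i+1}‖² ≤ 6·δ²·n; moreover, writing a_{i+1} = ∑_{j=1}^i α_j v'_j, every coefficient satisfies |α_j| ≤ 2δ. -/
import Mathlib


open scoped ComplexInnerProductSpace

/-- Let `n ≥ 1`, `0 ≤ δ < 1/(2n)`, and let `v'₁, …, v'ₙ` be unit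
vectors in a complex inner product space with `|⟨v'_i, v'_j⟩| ≤ δ` for `i ≠ j`. Then for
every `i` (with at least one predecessor), the orthogonal projection `a` of `v'_i` onto
the span of the previous vectors—characterized by `a ∈ span` and `v'_i − a ⊥ span`—
satisfies `‖a‖² ≤ 6·δ²·n`; moreover, writing `a = ∑_{j<i} α_j v'_j`, every coefficient
satisfies `|α_j| ≤ 2δ`. -/
theorem nearly_orthogonal_projection_bound {E : Type} [NormedAddCommGroup E]
    [InnerProductSpace ℂ E]
    (n : ℕ) (hn : 1 ≤ n) (δ : ℝ) (hδ0 : 0 ≤ δ) (hδ : δ < 1 / (2 * n))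
    (v' : Fin n → E) (hunit : ∀ i, ‖v' i‖ = 1)
    (hsmall : ∀ i j, i ≠ j → ‖⟪v' i, v' j⟫‖ ≤ δ) :
    ∀ i : Fin n, 0 < (i : ℕ) →
      ∀ a ∈ Submodule.span ℂ (v' '' {j | j < i}),
        (∀ w ∈ Submodule.span ℂ (v' '' {j | j < i}), ⟪v' i - a, w⟫ = 0) →
        ‖a‖ ^ 2 ≤ 6 * δ ^ 2 * n ∧
        ∀ α : Fin n → ℂ, a = ∑ j ∈ Finset.univ.filter (· < i), α j • v' j →
          ∀ j : Fin n, j < i → ‖α j‖ ≤ 2 * δ := by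
  intro i hi a ha hortho
  set S : Finset (Fin n) := Finset.univ.filter (· < i) with hS
  have hmemS : ∀ j : Fin n, j ∈ S ↔ j < i := by
    intro j; simp [hS]
  have hmem : ∀ j : Fin n, j < i → v' j ∈ Submodule.span ℂ (v' '' {j | j < i}) := by
    intro j hj
    exact Submodule.subset_span ⟨j, hj, rfl⟩
  have hn0 : (0:ℝ) < n := by exact_mod_cast Nat.lt_of_lt_of_le Nat.zero_lt_one hn
  have hnδ : (n : ℝ) * δ < 1/2 := by
    have h := mul_lt_mul_of_pos_left hδ hn0
    have : (n:ℝ) * (1 / (2 * n)) = 1/2 := by field_simp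
    linarith
  have hcardS : (S.card : ℝ) ≤ n := by
    exact_mod_cast le_trans (Finset.card_le_univ S) (by simp)
  -- coefficient bound claim
  have key : ∀ α : Fin n → ℂ, a = ∑ j ∈ S, α j • v' j →
      ∀ j : Fin n, j < i → ‖α j‖ ≤ 2 * δ := by
    intro α hα
    have hrec : ∀ j ∈ S, ‖α j‖ ≤ δ + ∑ k ∈ S.erase j, ‖α k‖ * δ := by
      intro j hj
      have hjlt : j < i := (hmemS j).mp hj
      have h0 : ⟪v' i - a, v' j⟫ = 0 := hortho _ (hmem j hjlt)
      have h1 : ⟪a, v' j⟫ = ⟪v' i, v' j⟫ := by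
        rw [inner_sub_left, sub_eq_zero] at h0
        exact h0.symm
      rw [hα, sum_inner] at h1
      simp only [inner_smul_left] at h1
      rw [← Finset.add_sum_erase S _ hj] at h1
      have hjj : ⟪v' j, v' j⟫ = 1 := by
        rw [inner_self_eq_norm_sq_to_K, hunit]; norm_num
      have h2 : (starRingEnd ℂ) (α j) =
          ⟪v' i, v' j⟫ - ∑ k ∈ S.erase j, (starRingEnd ℂ) (α k) * ⟪v' k, v' j⟫ := by
        rw [hjj] at h1
        rw [mul_one] at h1
        linear_combination h1
      calc ‖α j‖ = ‖(starRingEnd ℂ) (α j)‖ := (RCLike.norm_conj _).symm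
        _ ≤ ‖⟪v' i, v' j⟫‖ + ‖∑ k ∈ S.erase j, (starRingEnd ℂ) (α k) * ⟪v' k, v' j⟫‖ := by
            rw [h2]; exact norm_sub_le _ _
        _ ≤ δ + ∑ k ∈ S.erase j, ‖α k‖ * δ := by
            have hi_ne : i ≠ j := by
              intro h; exact absurd (h ▸ hjlt) (lt_irrefl _)
            refine add_le_add (hsmall i j hi_ne) ?_
            refine le_trans (norm_sum_le _ _) (Finset.sum_le_sum ?_)
            intro k hk
            have hkj : k ≠ j := Finset.ne_of_mem_erase hk
            rw [norm_mul, RCLike.norm_conj]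
            exact mul_le_mul_of_nonneg_left (hsmall k j hkj) (norm_nonneg _)
    have hSne : S.Nonempty := by
      refine ⟨⟨0, Nat.lt_of_lt_of_le Nat.zero_lt_one hn⟩, ?_⟩
      rw [hmemS]
      exact Fin.lt_def.mpr hi
    obtain ⟨j₀, hj₀S, hmax⟩ := S.exists_max_image (fun j => ‖α j‖) hSne
    have hb := hrec j₀ hj₀S
    have hsum : ∑ k ∈ S.erase j₀, ‖α k‖ * δ ≤ (n : ℝ) * (‖α j₀‖ * δ) := by
      calc ∑ k ∈ S.erase j₀, ‖α k‖ * δ ≤ ∑ _k ∈ S.erase j₀, ‖α j₀‖ * δ := by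
            refine Finset.sum_le_sum fun k hk => ?_
            exact mul_le_mul_of_nonneg_right (hmax k (Finset.mem_of_mem_erase hk)) hδ0
        _ = ((S.erase j₀).card : ℝ) * (‖α j₀‖ * δ) := by
            rw [Finset.sum_const, nsmul_eq_mul]
        _ ≤ (n : ℝ) * (‖α j₀‖ * δ) := by
            refine mul_le_mul_of_nonneg_right ?_ (mul_nonneg (norm_nonneg _) hδ0)
            calc ((S.erase j₀).card : ℝ) ≤ (S.card : ℝ) := by
                  exact_mod_cast Finset.card_le_card (Finset.erase_subset _ _)
              _ ≤ n := hcardS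
    have hM : ‖α j₀‖ ≤ 2 * δ := by
      nlinarith [norm_nonneg (α j₀)]
    intro j hj
    exact le_trans (hmax j ((hmemS j).mpr hj)) hM
  refine ⟨?_, key⟩
  -- obtain a representation of a
  obtain ⟨l, hl, hrepr⟩ := (Finsupp.mem_span_image_iff_linearCombination ℂ).mp ha
  have hsupp : l.support ⊆ S := by
    intro j hj
    rw [hmemS]
    exact hl hj
  have hrepr' : a = ∑ j ∈ S, l j • v' j := by
    rw [← hrepr, Finsupp.linearCombination_apply, Finsupp.sum]
    apply Finset.sum_subset hsupp
    intro j _ hj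
    rw [Finsupp.notMem_support_iff.mp hj, zero_smul]
  have hcoef := key (fun j => l j) hrepr'
  -- ‖a‖² = ⟪v'i, a⟫ bound
  have h0 : ⟪v' i - a, a⟫ = 0 := hortho a ha
  have h1 : ⟪v' i, a⟫ = ⟪a, a⟫ := by
    rw [inner_sub_left, sub_eq_zero] at h0
    exact h0
  have h2 : ‖a‖ ^ 2 = ‖⟪v' i, a⟫‖ := by
    rw [h1, inner_self_eq_norm_sq_to_K, norm_pow, RCLike.norm_ofReal, abs_norm]
  rw [h2, hrepr', inner_sum]
  simp only [inner_smul_right]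
  calc ‖∑ j ∈ S, l j * ⟪v' i, v' j⟫‖ ≤ ∑ j ∈ S, ‖l j * ⟪v' i, v' j⟫‖ := norm_sum_le _ _
    _ ≤ ∑ j ∈ S, (2*δ) * δ := by
        refine Finset.sum_le_sum fun j hj => ?_
        have hjlt : j < i := (hmemS j).mp hj
        have hij : i ≠ j := fun h => absurd (h ▸ hjlt) (lt_irrefl _)
        rw [norm_mul]
        exact mul_le_mul (hcoef j hjlt) (hsmall i j hij) (norm_nonneg _) (by positivity)
    _ = (S.card : ℝ) * ((2*δ)*δ) := by rw [Finset.sum_const, nsmul_eq_mul]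
    _ ≤ (n : ℝ) * ((2*δ)*δ) := mul_le_mul_of_nonneg_right hcardS (by positivity)
    _ ≤ 6 * δ^2 * n := by nlinarith
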